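/- Let (U^n,V^n) ~ DSBS(p)^⊗n on {−1,1}^n × {−1,1}^n, let f_i, g_i : {−1,1}^n → {−1,1} for i = 1,…,n, set X_i = f_i(U^n), Y_i = g_i(V^n), and suppose D(p_{X^nY^n} ‖ p_{XY}^{⊗n}) ≤ ε where p_{XY} is DSBS(p). Then Σ_{i=1}^n ( W^0[f_i] + W^0[g_i] ) ≤ 4 ln(2) · ε. -/
import Mathlib


open Finset

/-- KL divergence in bits (finite-alphabet sum form, convention `0 · log 0 = 0`). -/
noncomputable def klDiv {α : Type*} [Fintype α] (p q : α → ℝ) : ℝ :=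
  ∑ a, p a * Real.logb 2 (p a / q a)

/-- Encoding of the cube `{-1,1}` by `Bool`: `true ↦ 1`, `false ↦ -1`. -/
noncomputable def sgn (b : Bool) : ℝ := if b then 1 else -1

/-- Fourier coefficient `f̂_S = E[f(U^n) ∏_{i∈S} U_i]` for `U^n` uniform on the cube. -/
noncomputable def fhat {n : ℕ} (f : (Fin n → Bool) → ℝ) (S : Finset (Fin n)) : ℝ :=
  (∑ u : Fin n → Bool, f u * ∏ i ∈ S, sgn (u i)) / 2 ^ n

/-- Fourier weight at degree `k`: `W^k[f] = Σ_{|S|=k} f̂_S²`. -/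
noncomputable def fweight {n : ℕ} (f : (Fin n → Bool) → ℝ) (k : ℕ) : ℝ :=
  ∑ S ∈ Finset.univ.filter (fun S : Finset (Fin n) => S.card = k), (fhat f S) ^ 2

/-- The pmf of one DSBS(p) pair (values in the cube, encoded by `Bool`). -/
noncomputable def dsbsPair (p : ℝ) (uv : Bool × Bool) : ℝ :=
  if uv.1 = uv.2 then (1 - p) / 2 else p / 2

namespace Stmt10Aux
open Real

/-- Log-sum inequality. -/
lemma logSum {ι : Type*} (s : Finset ι) (a b : ι → ℝ)
    (ha : ∀ i ∈ s, 0 ≤ a i) (hb : ∀ i ∈ s, 0 ≤ b i)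
    (hab : ∀ i ∈ s, b i = 0 → a i = 0) :
    (∑ i ∈ s, a i) * Real.log ((∑ i ∈ s, a i) / (∑ i ∈ s, b i))
      ≤ ∑ i ∈ s, a i * Real.log (a i / b i) := by
  rcases (Finset.sum_nonneg hb).eq_or_lt with h0 | hBpos
  · have hb0 : ∀ i ∈ s, b i = 0 :=
      (Finset.sum_eq_zero_iff_of_nonneg hb).mp h0.symm
    have ha0 : ∀ i ∈ s, a i = 0 := fun i hi => hab i hi (hb0 i hi)
    rw [Finset.sum_eq_zero ha0, zero_mul]
    refine Finset.sum_nonneg fun i hi => ?_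
    rw [ha0 i hi, zero_mul]
  · set B := ∑ i ∈ s, b i with hB
    set t := s.filter (fun i => b i ≠ 0) with ht
    have hts : t ⊆ s := Finset.filter_subset _ _
    have hbt : ∀ i ∈ t, 0 < b i := by
      intro i hi
      rw [ht, Finset.mem_filter] at hi
      exact lt_of_le_of_ne (hb i hi.1) (Ne.symm hi.2)
    have hAt : ∑ i ∈ t, a i = ∑ i ∈ s, a i := by
      refine Finset.sum_filter_of_ne fun i hi hai => ?_
      intro hbi; exact hai (hab i hi hbi)
    have hBt : ∑ i ∈ t, b i = B := Finset.sum_filter_of_ne fun i hi h => h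
    have hRt : ∑ i ∈ t, a i * Real.log (a i / b i)
        = ∑ i ∈ s, a i * Real.log (a i / b i) := by
      refine Finset.sum_filter_of_ne fun i hi hne hbi => ?_
      exact hne (by rw [hab i hi hbi, zero_mul])
    have hw1 : ∑ i ∈ t, b i / B = 1 := by
      rw [← Finset.sum_div, hBt, div_self hBpos.ne']
    have jen := Real.convexOn_mul_log.map_sum_le
      (t := t) (w := fun i => b i / B) (p := fun i => a i / b i)
      (fun i hi => div_nonneg (hb i (hts hi)) hBpos.le) hw1
      (fun i hi => Set.mem_Ici.mpr (div_nonneg (ha i (hts hi)) (hbt i hi).le))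
    simp only [smul_eq_mul] at jen
    have e1 : ∑ i ∈ t, b i / B * (a i / b i) = (∑ i ∈ s, a i) / B := by
      rw [← hAt, Finset.sum_div]
      refine Finset.sum_congr rfl fun i hi => ?_
      rw [div_mul_div_comm, mul_comm (b i), mul_div_mul_right _ _ (hbt i hi).ne']
    have e2 : ∑ i ∈ t, b i / B * (a i / b i * Real.log (a i / b i))
        = (∑ i ∈ s, a i * Real.log (a i / b i)) / B := by
      rw [← hRt, Finset.sum_div]
      refine Finset.sum_congr rfl fun i hi => ?_
      rw [show b i / B * (a i / b i * Real.log (a i / b i))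
            = a i / b i * b i * Real.log (a i / b i) / B from by ring,
        div_mul_cancel₀ _ (hbt i hi).ne']
    rw [e1, e2] at jen
    have := mul_le_mul_of_nonneg_right jen hBpos.le
    rw [div_mul_cancel₀ _ hBpos.ne'] at this
    calc (∑ i ∈ s, a i) * Real.log ((∑ i ∈ s, a i) / B)
        = (∑ i ∈ s, a i) / B * Real.log ((∑ i ∈ s, a i) / B) * B := by
          field_simp
      _ ≤ _ := this



lemma sum_pi_prod {n : ℕ} (G : Fin n → Bool → ℝ) :
    ∑ v : Fin n → Bool, ∏ i, G i (v i) = ∏ i, ∑ b, G i b :=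
  (Fintype.prod_sum G).symm

lemma sum_sum_prod {n : ℕ} (F : Fin n → Bool → Bool → ℝ) :
    ∑ u : Fin n → Bool, ∑ v : Fin n → Bool, ∏ i, F i (u i) (v i)
      = ∏ i, ∑ a : Bool, ∑ b : Bool, F i a b := by
  have h1 : ∀ u : Fin n → Bool, ∑ v : Fin n → Bool, ∏ i, F i (u i) (v i)
      = ∏ i, ∑ b, F i (u i) b := fun u => sum_pi_prod fun i b => F i (u i) b
  simp_rw [h1]
  exact sum_pi_prod fun i a => ∑ b, F i a b

variable {p : ℝ}

lemma dsbs_nonneg (hp0 : 0 ≤ p) (hp1 : p ≤ 1) (ab : Bool × Bool) : 0 ≤ dsbsPair p ab := by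
  unfold dsbsPair; split <;> linarith

lemma dsbs_margL (a : Bool) : ∑ b : Bool, dsbsPair p (a, b) = 1 / 2 := by
  cases a <;> simp [dsbsPair] <;> ring

lemma dsbs_margR (b : Bool) : ∑ a : Bool, dsbsPair p (a, b) = 1 / 2 := by
  cases b <;> simp [dsbsPair] <;> ring

lemma dsbs_total : ∑ a : Bool, ∑ b : Bool, dsbsPair p (a, b) = 1 := by
  simp_rw [dsbs_margL]; norm_num

lemma pair_mgf (hp0 : 0 ≤ p) (hp1 : p ≤ 1) (s t : ℝ) :
    ∑ a : Bool, ∑ b : Bool, dsbsPair p (a, b) * Real.exp (s * sgn a + t * sgn b)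
      ≤ Real.exp (s ^ 2 + t ^ 2) := by
  have h1 : Real.cosh (s + t) ≤ Real.exp (s ^ 2 + t ^ 2) :=
    (Real.cosh_le_exp_half_sq _).trans (Real.exp_le_exp.mpr (by nlinarith [sq_nonneg (s - t)]))
  have h2 : Real.cosh (s - t) ≤ Real.exp (s ^ 2 + t ^ 2) :=
    (Real.cosh_le_exp_half_sq _).trans (Real.exp_le_exp.mpr (by nlinarith [sq_nonneg (s + t)]))
  have he : ∑ a : Bool, ∑ b : Bool, dsbsPair p (a, b) * Real.exp (s * sgn a + t * sgn b)
      = (1 - p) * Real.cosh (s + t) + p * Real.cosh (s - t) := by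
    simp [dsbsPair, sgn, Real.cosh_eq]
    ring_nf
  rw [he]
  nlinarith [h1, h2, Real.cosh_pos (x := s + t), Real.cosh_pos (x := s - t)]

end Stmt10Aux

/-- Lemma 7 of the paper: if `X_i = f_i(U^n)`, `Y_i = g_i(V^n)` simulate
`DSBS(p)^{⊗n}` within KL divergence `ε`, then `Σ_i (W⁰[f_i] + W⁰[g_i]) ≤ 4 ln 2 · ε`. -/
theorem stmt10 (p ε : ℝ) (hp0 : 0 ≤ p) (hp1 : p ≤ 1) (n : ℕ)
    (f g : Fin n → (Fin n → Bool) → Bool)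
    (pJ : (Fin n → Bool) × (Fin n → Bool) → ℝ)
    (hpJ : ∀ xy, pJ xy
      = ∑ u : Fin n → Bool, ∑ v : Fin n → Bool,
          (∏ i, dsbsPair p (u i, v i)) *
            (if (fun i => f i u) = xy.1 then (1:ℝ) else 0) *
            (if (fun i => g i v) = xy.2 then (1:ℝ) else 0))
    -- absolute continuity (implicit in `D ≤ ε < ∞` with the `+∞` convention)
    (habs : ∀ xy : (Fin n → Bool) × (Fin n → Bool),
      (∏ i, dsbsPair p (xy.1 i, xy.2 i)) = 0 → pJ xy = 0)
    (hD : klDiv pJ (fun xy => ∏ i, dsbsPair p (xy.1 i, xy.2 i)) ≤ ε) :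
    (∑ i : Fin n,
        (fweight (fun u => sgn (f i u)) 0 + fweight (fun v => sgn (g i v)) 0))
      ≤ 4 * Real.log 2 * ε := by
  set q : (Fin n → Bool) × (Fin n → Bool) → ℝ :=
    fun xy => ∏ i, dsbsPair p (xy.1 i, xy.2 i) with hq
  set μ : Fin n → ℝ := fun i => fhat (fun u => sgn (f i u)) ∅ with hμ
  set ν : Fin n → ℝ := fun i => fhat (fun v => sgn (g i v)) ∅ with hν
  set φ : (Fin n → Bool) × (Fin n → Bool) → ℝ :=
    fun xy => ∑ i, (μ i / 2 * sgn (xy.1 i) + ν i / 2 * sgn (xy.2 i)) with hφ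
  set T : ℝ := ∑ i, (μ i ^ 2 + ν i ^ 2) with hT
  -- Step A : the goal LHS equals T
  have hfw : ∀ h : (Fin n → Bool) → ℝ, fweight h 0 = (fhat h ∅) ^ 2 := by
    intro h
    have : (Finset.univ.filter fun S : Finset (Fin n) => S.card = 0) = {∅} := by
      ext S; simp [Finset.card_eq_zero]
    rw [fweight, this, Finset.sum_singleton]
  have hgoalT : (∑ i : Fin n,
      (fweight (fun u => sgn (f i u)) 0 + fweight (fun v => sgn (g i v)) 0)) = T := by
    rw [hT]; exact Finset.sum_congr rfl fun i _ => by rw [hfw, hfw]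
  -- Step C : transfer expectations from pJ to the source distribution
  have key : ∀ ψ : (Fin n → Bool) × (Fin n → Bool) → ℝ,
      ∑ xy, pJ xy * ψ xy
        = ∑ u : Fin n → Bool, ∑ v : Fin n → Bool,
            (∏ i, dsbsPair p (u i, v i)) * ψ (fun i => f i u, fun i => g i v) := by
    intro ψ
    simp_rw [hpJ, Finset.sum_mul]
    rw [Finset.sum_comm]
    refine Finset.sum_congr rfl fun u _ => ?_
    rw [Finset.sum_comm]
    refine Finset.sum_congr rfl fun v _ => ?_
    rw [Fintype.sum_prod_type]
    simp [mul_ite, ite_mul, Finset.sum_ite_eq]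
  -- marginal sums
  have hmargV : ∀ u : Fin n → Bool,
      ∑ v : Fin n → Bool, ∏ i, dsbsPair p (u i, v i) = (1 / 2 : ℝ) ^ n := by
    intro u
    rw [Stmt10Aux.sum_pi_prod fun i b => dsbsPair p (u i, b)]
    rw [Finset.prod_congr rfl fun i _ => Stmt10Aux.dsbs_margL (u i), Finset.prod_const]
    simp
  have hmargU : ∀ v : Fin n → Bool,
      ∑ u : Fin n → Bool, ∏ i, dsbsPair p (u i, v i) = (1 / 2 : ℝ) ^ n := by
    intro v
    rw [Stmt10Aux.sum_pi_prod fun i a => dsbsPair p (a, v i)]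
    rw [Finset.prod_congr rfl fun i _ => Stmt10Aux.dsbs_margR (v i), Finset.prod_const]
    simp
  -- mean identities
  have hE1 : ∀ i : Fin n,
      ∑ u : Fin n → Bool, ∑ v : Fin n → Bool,
        (∏ j, dsbsPair p (u j, v j)) * sgn (f i u) = μ i := by
    intro i
    have : ∀ u : Fin n → Bool, ∑ v : Fin n → Bool,
        (∏ j, dsbsPair p (u j, v j)) * sgn (f i u)
        = (1 / 2 : ℝ) ^ n * sgn (f i u) := by
      intro u; rw [← Finset.sum_mul, hmargV u]
    simp_rw [this]
    rw [← Finset.mul_sum, hμ]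
    simp only [fhat, Finset.prod_empty, mul_one]
    rw [one_div, inv_pow, inv_mul_eq_div]
  have hE2 : ∀ i : Fin n,
      ∑ u : Fin n → Bool, ∑ v : Fin n → Bool,
        (∏ j, dsbsPair p (u j, v j)) * sgn (g i v) = ν i := by
    intro i
    rw [Finset.sum_comm]
    have : ∀ v : Fin n → Bool, ∑ u : Fin n → Bool,
        (∏ j, dsbsPair p (u j, v j)) * sgn (g i v)
        = (1 / 2 : ℝ) ^ n * sgn (g i v) := by
      intro v; rw [← Finset.sum_mul, hmargU v]
    simp_rw [this]
    rw [← Finset.mul_sum, hν]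
    simp only [fhat, Finset.prod_empty, mul_one]
    rw [one_div, inv_pow, inv_mul_eq_div]
  -- expectation of φ under pJ
  have hEφ : ∑ xy, pJ xy * φ xy = T / 2 := by
    rw [key φ]
    have expand : ∀ u v : Fin n → Bool,
        (∏ j, dsbsPair p (u j, v j)) * φ (fun i => f i u, fun i => g i v)
        = ∑ i, (μ i / 2 * ((∏ j, dsbsPair p (u j, v j)) * sgn (f i u))
              + ν i / 2 * ((∏ j, dsbsPair p (u j, v j)) * sgn (g i v))) := by
      intro u v
      rw [hφ]
      simp only
      rw [Finset.mul_sum]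
      exact Finset.sum_congr rfl fun i _ => by ring
    simp_rw [expand]
    have swap1 : ∀ u : Fin n → Bool,
        (∑ v : Fin n → Bool, ∑ i : Fin n,
          (μ i / 2 * ((∏ j, dsbsPair p (u j, v j)) * sgn (f i u))
              + ν i / 2 * ((∏ j, dsbsPair p (u j, v j)) * sgn (g i v))))
        = ∑ i : Fin n, ∑ v : Fin n → Bool,
          (μ i / 2 * ((∏ j, dsbsPair p (u j, v j)) * sgn (f i u))
              + ν i / 2 * ((∏ j, dsbsPair p (u j, v j)) * sgn (g i v))) :=
      fun u => Finset.sum_comm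
    simp_rw [swap1]
    rw [Finset.sum_comm, hT, Finset.sum_div]
    refine Finset.sum_congr rfl fun i _ => ?_
    simp_rw [Finset.sum_add_distrib, ← Finset.mul_sum]
    rw [hE1 i, hE2 i]
    ring
  -- nonnegativity facts
  have hq0 : ∀ xy : (Fin n → Bool) × (Fin n → Bool), 0 ≤ q xy := fun xy =>
    Finset.prod_nonneg fun i _ => Stmt10Aux.dsbs_nonneg hp0 hp1 _
  have hpJ0 : ∀ xy : (Fin n → Bool) × (Fin n → Bool), 0 ≤ pJ xy := by
    intro xy
    rw [hpJ]
    refine Finset.sum_nonneg fun u _ => Finset.sum_nonneg fun v _ => ?_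
    refine mul_nonneg (mul_nonneg
      (Finset.prod_nonneg fun i _ => Stmt10Aux.dsbs_nonneg hp0 hp1 _) ?_) ?_ <;>
      split <;> norm_num
  have hT0 : 0 ≤ T := by
    rw [hT]; exact Finset.sum_nonneg fun i _ => by positivity
  -- normalization
  have hsum1 : ∑ xy, pJ xy = 1 := by
    have h := key fun _ => (1 : ℝ)
    simp only [mul_one] at h
    rw [h, Stmt10Aux.sum_sum_prod fun i a b => dsbsPair p (a, b),
      Finset.prod_congr rfl fun (i : Fin n) _ => Stmt10Aux.dsbs_total]
    simp
  -- mgf bound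
  have hZle : ∑ xy, q xy * Real.exp (φ xy) ≤ Real.exp (T / 4) := by
    have factor : ∀ xy : (Fin n → Bool) × (Fin n → Bool),
        q xy * Real.exp (φ xy)
          = ∏ i, (dsbsPair p (xy.1 i, xy.2 i)
              * Real.exp (μ i / 2 * sgn (xy.1 i) + ν i / 2 * sgn (xy.2 i))) := by
      intro xy
      rw [hq, hφ]
      simp only
      rw [Real.exp_sum, ← Finset.prod_mul_distrib]
    simp_rw [factor]
    rw [Fintype.sum_prod_type]
    rw [Stmt10Aux.sum_sum_prod fun i a b =>
      dsbsPair p (a, b) * Real.exp (μ i / 2 * sgn a + ν i / 2 * sgn b)]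
    calc ∏ i, ∑ a : Bool, ∑ b : Bool,
          dsbsPair p (a, b) * Real.exp (μ i / 2 * sgn a + ν i / 2 * sgn b)
        ≤ ∏ i, Real.exp ((μ i / 2) ^ 2 + (ν i / 2) ^ 2) := by
          refine Finset.prod_le_prod (fun i _ => ?_) fun i _ =>
            Stmt10Aux.pair_mgf hp0 hp1 _ _
          exact Finset.sum_nonneg fun a _ => Finset.sum_nonneg fun b _ =>
            mul_nonneg (Stmt10Aux.dsbs_nonneg hp0 hp1 _) (Real.exp_nonneg _)
      _ = Real.exp (T / 4) := by
          rw [← Real.exp_sum]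
          congr 1
          rw [hT, Finset.sum_div]
          exact Finset.sum_congr rfl fun i _ => by ring
  -- Donsker–Varadhan via log-sum
  have hDV := Stmt10Aux.logSum Finset.univ pJ (fun xy => q xy * Real.exp (φ xy))
    (fun xy _ => hpJ0 xy)
    (fun xy _ => mul_nonneg (hq0 xy) (Real.exp_nonneg _))
    (fun xy _ hz => habs xy (by
      rcases mul_eq_zero.mp hz with h | h
      · exact h
      · exact absurd h (Real.exp_ne_zero _)))
  rw [hsum1, one_mul, one_div, Real.log_inv] at hDV
  have hsplit : ∀ xy : (Fin n → Bool) × (Fin n → Bool),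
      pJ xy * Real.log (pJ xy / (q xy * Real.exp (φ xy)))
        = pJ xy * Real.log (pJ xy / q xy) - pJ xy * φ xy := by
    intro xy
    rcases eq_or_ne (pJ xy) 0 with h | h
    · rw [h]; ring
    · have hqne : q xy ≠ 0 := fun hz => h (habs xy hz)
      rw [div_mul_eq_div_div,
        Real.log_div (div_ne_zero h hqne) (Real.exp_ne_zero _), Real.log_exp]
      ring
  simp_rw [hsplit, Finset.sum_sub_distrib, hEφ] at hDV
  -- bound log Z
  have hZ0 : 0 ≤ ∑ xy, q xy * Real.exp (φ xy) :=
    Finset.sum_nonneg fun xy _ => mul_nonneg (hq0 xy) (Real.exp_nonneg _)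
  have hlogZ : Real.log (∑ xy, q xy * Real.exp (φ xy)) ≤ T / 4 := by
    rcases hZ0.eq_or_lt with h | h
    · rw [← h, Real.log_zero]; linarith
    · exact (Real.log_le_log h hZle).trans_eq (Real.log_exp _)
  -- convert hD to natural log
  have hlog2 : (0 : ℝ) < Real.log 2 := Real.log_pos (by norm_num)
  have hkl : klDiv pJ q
      = (∑ xy, pJ xy * Real.log (pJ xy / q xy)) / Real.log 2 := by
    simp only [klDiv, Real.logb, ← mul_div_assoc, ← Finset.sum_div]
  rw [hkl, div_le_iff₀ hlog2] at hD
  rw [hgoalT]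
  -- combine
  linarith [hDV, hlogZ, hD]
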